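/- arXiv:2104.02677 — 2 statements merged into one kernel-verified Lean document; each statement's English description precedes it below -/
import Mathlib

section
/- (Soundness, item 2, left time robustness.) For every STL formula φ, every signal x : {0,…,H} → ℝⁿ, and every time t ∈ {0,…,H}: if the left time robustness satisfies θ⁻_φ(x,t) < 0, then the characteristic function satisfies χ_φ(x,t) = −1. -/
namespace STLTime

/-- STL formulas over states in `ℝⁿ`: predicates `μ(x) ≥ 0`, negation,
conjunction, and bounded Until `U_[a,b]` with `a ≤ b`. -/
inductive STL (n : ℕ) : Type where
  | pred : ((Fin n → ℝ) → ℝ) → STL n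
  | not  : STL n → STL n
  | and  : STL n → STL n → STL n
  | untl : (a b : ℕ) → a ≤ b → STL n → STL n → STL n

/-- Characteristic function `χ_φ(x,t) ∈ {-1,+1}` over horizon `H`. -/
noncomputable def chi {n : ℕ} (H : ℕ) (x : ℕ → Fin n → ℝ) : STL n → ℕ → ℤ
  | .pred μ, t => if 0 ≤ μ (x t) then 1 else -1
  | .not φ, t => - chi H x φ t
  | .and φ₁ φ₂, t => min (chi H x φ₁ t) (chi H x φ₂ t)
  | .untl a b _ φ₁ φ₂, t =>
      if h : (Finset.Icc (t + a) (min (t + b) H)).Nonempty then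
        (Finset.Icc (t + a) (min (t + b) H)).sup' h fun t' =>
          (Finset.Ico t t').fold min (chi H x φ₂ t') fun t'' => chi H x φ₁ t''
      else -1

/-- Right time robustness `θ⁺_φ(x,t)` over horizon `H`. -/
noncomputable def thetaPlus {n : ℕ} (H : ℕ) (x : ℕ → Fin n → ℝ) : STL n → ℕ → ℤ
  | .pred μ, t =>
      chi H x (.pred μ) t *
        ((sSup {τ : ℕ | t + τ ≤ H ∧
            ∀ t' ∈ Set.Icc t (t + τ),
              chi H x (.pred μ) t' = chi H x (.pred μ) t} : ℕ) : ℤ)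
  | .not φ, t => - thetaPlus H x φ t
  | .and φ₁ φ₂, t => min (thetaPlus H x φ₁ t) (thetaPlus H x φ₂ t)
  | .untl a b _ φ₁ φ₂, t =>
      if h : (Finset.Icc (t + a) (min (t + b) H)).Nonempty then
        (Finset.Icc (t + a) (min (t + b) H)).sup' h fun t' =>
          (Finset.Ico t t').fold min (thetaPlus H x φ₂ t') fun t'' => thetaPlus H x φ₁ t''
      else -1

/-- Left time robustness `θ⁻_φ(x,t)` over horizon `H`. -/
noncomputable def thetaMinus {n : ℕ} (H : ℕ) (x : ℕ → Fin n → ℝ) : STL n → ℕ → ℤ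
  | .pred μ, t =>
      chi H x (.pred μ) t *
        ((sSup {τ : ℕ | τ ≤ t ∧
            ∀ t' ∈ Set.Icc (t - τ) t,
              chi H x (.pred μ) t' = chi H x (.pred μ) t} : ℕ) : ℤ)
  | .not φ, t => - thetaMinus H x φ t
  | .and φ₁ φ₂, t => min (thetaMinus H x φ₁ t) (thetaMinus H x φ₂ t)
  | .untl a b _ φ₁ φ₂, t =>
      if h : (Finset.Icc (t + a) (min (t + b) H)).Nonempty then
        (Finset.Icc (t + a) (min (t + b) H)).sup' h fun t' =>
          (Finset.Ico t t').fold min (thetaMinus H x φ₂ t') fun t'' => thetaMinus H x φ₁ t''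
      else -1


private lemma chi_bounds {n H : ℕ} (x : ℕ → Fin n → ℝ) (φ : STL n) (t : ℕ) :
    -1 ≤ chi H x φ t ∧ chi H x φ t ≤ 1 := by
  induction φ generalizing t with
  | pred μ => simp only [chi]; split <;> omega
  | not φ ih => have := ih t; simp only [chi]; omega
  | and φ₁ φ₂ ih₁ ih₂ =>
      have h1 := ih₁ t; have h2 := ih₂ t
      simp only [chi]; omega
  | untl a b hab φ₁ φ₂ ih₁ ih₂ =>
      simp only [chi]
      split
      · next hne =>
        constructor
        · obtain ⟨t', ht'⟩ := hne
          refine le_trans ?_ (Finset.le_sup' _ ht')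
          rw [Finset.le_fold_min]
          exact ⟨(ih₂ t').1, fun t'' _ => (ih₁ t'').1⟩
        · apply Finset.sup'_le
          intro t' _
          rw [Finset.fold_min_le]
          exact Or.inl (ih₂ t').2
      · omega

private lemma sound_aux {n H : ℕ} (x : ℕ → Fin n → ℝ) (φ : STL n) (t : ℕ) :
    (thetaMinus H x φ t < 0 → chi H x φ t = -1) ∧
    (0 < thetaMinus H x φ t → chi H x φ t = 1) := by
  induction φ generalizing t with
  | pred μ =>
      simp only [thetaMinus, chi]
      split <;> constructor <;> intro h <;> simp_all <;> omega
  | not φ ih =>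
      refine ⟨fun h => ?_, fun h => ?_⟩
      · simp only [thetaMinus] at h
        simp only [chi, (ih t).2 (by omega)]
      · simp only [thetaMinus] at h
        simp only [chi, (ih t).1 (by omega)]; ring
  | and φ₁ φ₂ ih₁ ih₂ =>
      have b1 := chi_bounds (H := H) x φ₁ t; have b2 := chi_bounds (H := H) x φ₂ t
      refine ⟨fun h => ?_, fun h => ?_⟩
      · simp only [thetaMinus, min_lt_iff] at h
        simp only [chi]
        rcases h with h | h
        · have := (ih₁ t).1 h; omega
        · have := (ih₂ t).1 h; omega
      · simp only [thetaMinus, lt_min_iff] at h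
        simp only [chi, (ih₁ t).2 h.1, (ih₂ t).2 h.2, min_self]
  | untl a b hab φ₁ φ₂ ih₁ ih₂ =>
      by_cases hne : (Finset.Icc (t + a) (min (t + b) H)).Nonempty
      · refine ⟨fun h => ?_, fun h => ?_⟩
        · simp only [thetaMinus, dif_pos hne, Finset.sup'_lt_iff] at h
          simp only [chi, dif_pos hne]
          have key : ∀ t' ∈ Finset.Icc (t + a) (min (t + b) H),
              ((Finset.Ico t t').fold min (chi H x φ₂ t') fun t'' => chi H x φ₁ t'') = -1 := by
            intro t' ht'
            have hF := h t' ht'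
            have hF' : ((Finset.Ico t t').fold min (thetaMinus H x φ₂ t')
                fun t'' => thetaMinus H x φ₁ t'') ≤ -1 := by omega
            rw [Finset.fold_min_le] at hF'
            have hle : ((Finset.Ico t t').fold min (chi H x φ₂ t') fun t'' => chi H x φ₁ t'') ≤ -1 := by
              rw [Finset.fold_min_le]
              rcases hF' with h2 | ⟨t'', ht'', h1⟩
              · exact Or.inl (le_of_eq ((ih₂ t').1 (by omega)))
              · exact Or.inr ⟨t'', ht'', le_of_eq ((ih₁ t'').1 (by omega))⟩
            have hge : -1 ≤ ((Finset.Ico t t').fold min (chi H x φ₂ t') fun t'' => chi H x φ₁ t'') := by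
              rw [Finset.le_fold_min]
              exact ⟨(chi_bounds (H := H) x φ₂ t').1, fun t'' _ => (chi_bounds (H := H) x φ₁ t'').1⟩
            omega
          obtain ⟨t₀, ht₀⟩ := id hne
          have hle := Finset.sup'_le hne _ (fun t' ht' => le_of_eq (key t' ht'))
          have hge := Finset.le_sup' (f := fun t' =>
            (Finset.Ico t t').fold min (chi H x φ₂ t') fun t'' => chi H x φ₁ t'') ht₀
          rw [key t₀ ht₀] at hge
          omega
        · simp only [thetaMinus, dif_pos hne, Finset.lt_sup'_iff] at h
          simp only [chi, dif_pos hne]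
          obtain ⟨t', ht', hF⟩ := h
          have hF' : (1:ℤ) ≤ (Finset.Ico t t').fold min (thetaMinus H x φ₂ t')
              fun t'' => thetaMinus H x φ₁ t'' := by omega
          rw [Finset.le_fold_min] at hF'
          have hGeq : ((Finset.Ico t t').fold min (chi H x φ₂ t') fun t'' => chi H x φ₁ t'') = 1 := by
            have hge : (1:ℤ) ≤ ((Finset.Ico t t').fold min (chi H x φ₂ t') fun t'' => chi H x φ₁ t'') := by
              rw [Finset.le_fold_min]
              exact ⟨le_of_eq ((ih₂ t').2 (by have := hF'.1; omega)).symm,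
                fun t'' ht'' => le_of_eq ((ih₁ t'').2 (by have := hF'.2 t'' ht''; omega)).symm⟩
            have hle : ((Finset.Ico t t').fold min (chi H x φ₂ t') fun t'' => chi H x φ₁ t'') ≤ 1 := by
              rw [Finset.fold_min_le]
              exact Or.inl (chi_bounds (H := H) x φ₂ t').2
            omega
          have hge := Finset.le_sup' (f := fun t' =>
            (Finset.Ico t t').fold min (chi H x φ₂ t') fun t'' => chi H x φ₁ t'') ht'
          rw [hGeq] at hge
          have hle : (Finset.Icc (t + a) (min (t + b) H)).sup' hne (fun t' =>
              (Finset.Ico t t').fold min (chi H x φ₂ t') fun t'' => chi H x φ₁ t'') ≤ 1 := by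
            apply Finset.sup'_le
            intro s _
            rw [Finset.fold_min_le]
            exact Or.inl (chi_bounds (H := H) x φ₂ s).2
          omega
      · refine ⟨fun _ => ?_, fun h => ?_⟩
        · simp only [chi, dif_neg hne]
        · simp only [thetaMinus, dif_neg hne] at h; omega

/-- Soundness, item 2, left time robustness: `θ⁻_φ(x,t) < 0 → χ_φ(x,t) = -1`. -/
theorem soundness_left_neg {n H : ℕ} (φ : STL n) (x : ℕ → Fin n → ℝ)
    (t : ℕ) (ht : t ≤ H) (h : thetaMinus H x φ t < 0) :
    chi H x φ t = -1 := by
  exact (sound_aux x φ t).1 h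

end STLTime
end

section
/- (Soundness, item 3, left time robustness.) For every STL formula φ, every signal x : {0,…,H} → ℝⁿ, and every time t ∈ {0,…,H}: if the characteristic function satisfies χ_φ(x,t) = +1, then the left time robustness satisfies θ⁻_φ(x,t) ≥ 0. -/
namespace STLTime

lemma fold_min_pm (s : Finset ℕ) (b : ℤ) (f : ℕ → ℤ)
    (hb : b = 1 ∨ b = -1) (hf : ∀ x ∈ s, f x = 1 ∨ f x = -1) :
    s.fold min b f = 1 ∨ s.fold min b f = -1 := by
  classical
  induction s using Finset.induction_on with
  | empty => simpa using hb
  | @insert a s' hx ih =>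
    rw [Finset.fold_insert hx]
    rcases hf a (Finset.mem_insert_self a s') with h1 | h1 <;>
      rcases ih (fun y hy => hf y (Finset.mem_insert_of_mem hy)) with h2 | h2 <;>
      simp [h1, h2]

lemma chi_pm {n : ℕ} (H : ℕ) (x : ℕ → Fin n → ℝ) (φ : STL n) (t : ℕ) :
    chi H x φ t = 1 ∨ chi H x φ t = -1 := by
  induction φ generalizing t with
  | pred μ => simp only [chi]; split <;> simp
  | not φ ih => rcases ih t with h | h <;> simp [chi, h]
  | and φ₁ φ₂ ih₁ ih₂ =>
    simp only [chi]
    rcases ih₁ t with h1 | h1 <;> rcases ih₂ t with h2 | h2 <;> simp [h1, h2]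
  | untl a b hab φ₁ φ₂ ih₁ ih₂ =>
    simp only [chi]
    split
    · rename_i hne
      obtain ⟨t', ht', heq⟩ := Finset.exists_mem_eq_sup' hne
        (fun t' => (Finset.Ico t t').fold min (chi H x φ₂ t') fun t'' => chi H x φ₁ t'')
      rw [heq]
      exact fold_min_pm _ _ _ (ih₂ t') (fun y _ => ih₁ y)
    · right; rfl

lemma sound_both {n : ℕ} (H : ℕ) (x : ℕ → Fin n → ℝ) (φ : STL n) :
    ∀ t : ℕ, t ≤ H →
      (chi H x φ t = 1 → 0 ≤ thetaMinus H x φ t) ∧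
      (chi H x φ t = -1 → thetaMinus H x φ t ≤ 0) := by
  induction φ with
  | pred μ =>
    intro t ht
    constructor <;> intro h <;> simp only [thetaMinus, h] <;> omega
  | not φ ih =>
    intro t ht
    have I := ih t ht
    simp only [thetaMinus]
    constructor <;> intro h <;> simp only [chi] at h
    · have e : chi H x φ t = -1 := by omega
      linarith [I.2 e]
    · have e : chi H x φ t = 1 := by omega
      linarith [I.1 e]
  | and φ₁ φ₂ ih₁ ih₂ =>
    intro t ht
    simp only [chi, thetaMinus]
    constructor
    · intro h
      have h1 : (1 : ℤ) ≤ chi H x φ₁ t := le_trans (by rw [h]) (min_le_left _ _)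
      have h2 : (1 : ℤ) ≤ chi H x φ₂ t := le_trans (by rw [h]) (min_le_right _ _)
      have e1 : chi H x φ₁ t = 1 := by rcases chi_pm H x φ₁ t with h' | h' <;> omega
      have e2 : chi H x φ₂ t = 1 := by rcases chi_pm H x φ₂ t with h' | h' <;> omega
      exact le_min ((ih₁ t ht).1 e1) ((ih₂ t ht).1 e2)
    · intro h
      have : min (chi H x φ₁ t) (chi H x φ₂ t) ≤ -1 := le_of_eq h
      rcases min_le_iff.mp this with h' | h'
      · have e : chi H x φ₁ t = -1 := by rcases chi_pm H x φ₁ t with h'' | h'' <;> omega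
        exact le_trans (min_le_left _ _) ((ih₁ t ht).2 e)
      · have e : chi H x φ₂ t = -1 := by rcases chi_pm H x φ₂ t with h'' | h'' <;> omega
        exact le_trans (min_le_right _ _) ((ih₂ t ht).2 e)
  | untl a b hab φ₁ φ₂ ih₁ ih₂ =>
    intro t ht
    simp only [chi, thetaMinus]
    by_cases hne : (Finset.Icc (t + a) (min (t + b) H)).Nonempty
    · rw [dif_pos hne, dif_pos hne]
      constructor
      · intro h
        obtain ⟨t', ht', heq⟩ := Finset.exists_mem_eq_sup' hne
          (fun t' => (Finset.Ico t t').fold min (chi H x φ₂ t') fun t'' => chi H x φ₁ t'')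
        rw [heq] at h
        have hfold : (1 : ℤ) ≤ (Finset.Ico t t').fold min (chi H x φ₂ t')
            fun t'' => chi H x φ₁ t'' := le_of_eq h.symm
        rw [Finset.le_fold_min] at hfold
        have ht'H : t' ≤ H := le_trans (Finset.mem_Icc.mp ht').2 (min_le_right _ _)
        have e2 : chi H x φ₂ t' = 1 := by
          rcases chi_pm H x φ₂ t' with h' | h' <;> omega
        have hθ : (0 : ℤ) ≤ (Finset.Ico t t').fold min (thetaMinus H x φ₂ t')
            fun t'' => thetaMinus H x φ₁ t'' := by
          rw [Finset.le_fold_min]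
          refine ⟨(ih₂ t' ht'H).1 e2, fun y hy => ?_⟩
          have hyH : y ≤ H := le_trans (le_of_lt (Finset.mem_Ico.mp hy).2) ht'H
          have := hfold.2 y hy
          have e1 : chi H x φ₁ y = 1 := by
            rcases chi_pm H x φ₁ y with h' | h' <;> omega
          exact (ih₁ y hyH).1 e1
        exact le_trans hθ (Finset.le_sup'
          (fun t' => (Finset.Ico t t').fold min (thetaMinus H x φ₂ t')
            fun t'' => thetaMinus H x φ₁ t'') ht')
      · intro h
        apply Finset.sup'_le
        intro t' ht'
        have ht'H : t' ≤ H := le_trans (Finset.mem_Icc.mp ht').2 (min_le_right _ _)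
        have hch : ((Finset.Ico t t').fold min (chi H x φ₂ t')
            fun t'' => chi H x φ₁ t'') ≤ -1 := by
          rw [← h]
          exact Finset.le_sup'
            (fun t' => (Finset.Ico t t').fold min (chi H x φ₂ t')
              fun t'' => chi H x φ₁ t'') ht'
        rw [Finset.fold_min_le] at hch
        rcases hch with h' | ⟨y, hy, h'⟩
        · have e2 : chi H x φ₂ t' = -1 := by
            rcases chi_pm H x φ₂ t' with h'' | h'' <;> omega
          calc ((Finset.Ico t t').fold min (thetaMinus H x φ₂ t')
              fun t'' => thetaMinus H x φ₁ t'') ≤ thetaMinus H x φ₂ t' :=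
                (Finset.fold_min_le _).mpr (Or.inl le_rfl)
            _ ≤ 0 := (ih₂ t' ht'H).2 e2
        · have hyH : y ≤ H := le_trans (le_of_lt (Finset.mem_Ico.mp hy).2) ht'H
          have e1 : chi H x φ₁ y = -1 := by
            rcases chi_pm H x φ₁ y with h'' | h'' <;> omega
          calc ((Finset.Ico t t').fold min (thetaMinus H x φ₂ t')
              fun t'' => thetaMinus H x φ₁ t'') ≤ thetaMinus H x φ₁ y :=
                (Finset.fold_min_le _).mpr (Or.inr ⟨y, hy, le_rfl⟩)
            _ ≤ 0 := (ih₁ y hyH).2 e1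
    · rw [dif_neg hne, dif_neg hne]
      exact ⟨fun h => by omega, fun _ => by norm_num⟩

/-- Soundness, item 3, left time robustness: `χ_φ(x,t) = +1 → θ⁻_φ(x,t) ≥ 0`. -/
theorem soundness_left_sat_nonneg {n H : ℕ} (φ : STL n) (x : ℕ → Fin n → ℝ)
    (t : ℕ) (ht : t ≤ H) (h : chi H x φ t = 1) :
    0 ≤ thetaMinus H x φ t :=
  (sound_both H x φ t ht).1 h

end STLTime
end
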